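/- arXiv:2603.17595 — 3 statements merged into one kernel-verified Lean document; each statement's English description precedes it below -/
import Mathlib

section
/- Let G be a simple graph on n vertices with Laplacian matrix L(G), let L(Ḡ) = nI − J − L(G) be the Laplacian of its complement, and let H be a simple graph on m vertices with Laplacian L(H). Let L(G+H) be the Laplacian of the join, given in block form by L(G+H) = [[L(G) + mI_n, −J_{n×m}],[−J_{m×n}, L(H) + nI_m]]. Suppose exp(iτ L(Ḡ)) u = α u + β v for some real unit vectors u, v ∈ ℝ^n that are linearly independent and some α, β ∈ ℂ with β ≠ 0, and suppose τ(n+m) ∈ 2πℤ. Then exp(−iτ L(G+H)) [uᵀ 0]ᵀ = α [uᵀ 0]ᵀ + β [vᵀ 0]ᵀ; in particular the join G + H exhibits fractional revival from [uᵀ 0]ᵀ to [vᵀ 0]ᵀ relative to its Laplacian matrix. -/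
open Matrix Filter

/-- Transition matrix `U(t) = exp(itM)` of a real symmetric matrix `M`, acting on `ℂ^ι`. -/
noncomputable def transU {ι : Type*} [Fintype ι] [DecidableEq ι]
    (M : Matrix ι ι ℝ) (t : ℝ) : Matrix ι ι ℂ :=
  NormedSpace.exp ((Complex.I * (t : ℂ)) • M.map Complex.ofReal)

/-- Transition matrix `exp(itM)` of a complex matrix `M`. -/
noncomputable def transUC {ι : Type*} [Fintype ι] [DecidableEq ι]
    (M : Matrix ι ι ℂ) (t : ℝ) : Matrix ι ι ℂ :=
  NormedSpace.exp ((Complex.I * (t : ℂ)) • M)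

/-- Real standard basis vector `e_a`. -/
def eVecR {ι : Type*} [DecidableEq ι] (a : ι) : ι → ℝ := fun j => if j = a then 1 else 0

/-- Complex standard basis vector `e_a`. -/
def eVec {ι : Type*} [DecidableEq ι] (a : ι) : ι → ℂ := fun j => if j = a then 1 else 0

/-- Coercion of a real vector to a complex vector. -/
def cVec {ι : Type*} (u : ι → ℝ) : ι → ℂ := fun j => (u j : ℂ)

/-- The plus state `(e_a + e_b)/√2`. -/
noncomputable def plusState {ι : Type*} [DecidableEq ι] (a b : ι) : ι → ℂ :=
  ((Real.sqrt 2 : ℂ))⁻¹ • (eVec a + eVec b)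

/-- The pair state `(e_a − e_b)/√2`. -/
noncomputable def pairState {ι : Type*} [DecidableEq ι] (a b : ι) : ι → ℂ :=
  ((Real.sqrt 2 : ℂ))⁻¹ • (eVec a - eVec b)

/-- Pretty good state transfer from `u` to `v` relative to `M`:
there are a sequence of times `t k` and a unimodular `γ` with `U(t k) u → γ v`. -/
def PGST {ι : Type*} [Fintype ι] [DecidableEq ι]
    (M : Matrix ι ι ℝ) (u v : ι → ℂ) : Prop :=
  ∃ (t : ℕ → ℝ) (γ : ℂ), ‖γ‖ = 1 ∧
    Tendsto (fun k => (transU M (t k)).mulVec u) atTop (nhds (γ • v))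

/-- The permutation matrix of `σ`, satisfying `permMat σ *ᵥ e_a = e_{σ a}`. -/
def permMat {ι : Type*} [DecidableEq ι] (σ : Equiv.Perm ι) : Matrix ι ι ℝ :=
  Matrix.of fun i j => if σ j = i then 1 else 0

/-- Adjacency matrix of the circulant graph `Cay(ℤ/n, S)`. -/
noncomputable def cayA (n : ℕ) (S : Finset (ZMod n)) : Matrix (ZMod n) (ZMod n) ℝ :=
  Matrix.of fun a b => if a - b ∈ S then 1 else 0

/-- Adjacency matrix of the cycle `C_n` on `ℤ/n`. -/
noncomputable def cycA (n : ℕ) : Matrix (ZMod n) (ZMod n) ℝ :=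
  Matrix.of fun a b => if a - b = 1 ∨ b - a = 1 then 1 else 0

/-- Adjacency matrix `J − I − A(C_n)` of the complement of the cycle `C_n`. -/
noncomputable def cycAbar (n : ℕ) : Matrix (ZMod n) (ZMod n) ℝ :=
  Matrix.of (fun _ _ => (1 : ℝ)) - 1 - cycA n

/-!
With `N = n + m`, `J` the all-ones matrix and `L(X)` the Laplacian, the join satisfies
`L(G + H) = N I - J - (L(Ḡ) ⊕ L(H̄))`, and the block-diagonal term commutes with `J` because
Laplacians have zero row sums. Hence `exp(-iτ L(G + H))` factors as
`exp(iτ (L(Ḡ) ⊕ L(H̄))) · exp(iτ J) · exp(-iτN) I`. Since `J / N` is idempotent,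
`exp(iτ J) = I + (exp(iτN) - 1) J / N`, so the last two factors are `I` when
`τN ∈ 2πℤ`, and the block-diagonal factor maps `[uᵀ 0]ᵀ` to `[(exp(iτ L(Ḡ)) u)ᵀ 0]ᵀ`.
-/

open NormedSpace

-- The `0 ^ k` term makes the formula uniform in `k`, including `k = 0`.
theorem IsIdempotentElem.smul_pow {𝕂 𝔸 : Type*} [CommSemiring 𝕂] [Ring 𝔸] [Algebra 𝕂 𝔸]
    {p : 𝔸} (hp : IsIdempotentElem p) (z : 𝕂) (k : ℕ) :
    (z • p) ^ k = z ^ k • p + (0 : 𝕂) ^ k • (1 - p) := by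
  cases k with
  | zero => simp
  | succ k => rw [_root_.smul_pow, hp.pow_succ_eq, zero_pow k.succ_ne_zero, zero_smul, add_zero]

theorem IsIdempotentElem.exp_smul {𝕂 𝔸 : Type*} [RCLike 𝕂] [NormedRing 𝔸] [NormedAlgebra 𝕂 𝔸]
    [CompleteSpace 𝔸] {p : 𝔸} (hp : IsIdempotentElem p) (z : 𝕂) :
    exp (z • p) = exp z • p + (1 - p) := by
  have h := ((exp_series_hasSum_exp' (𝕂 := 𝕂) z).smul_const p).add
    ((exp_series_hasSum_exp' (𝕂 := 𝕂) (0 : 𝕂)).smul_const (1 - p))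
  rw [exp_zero, one_smul] at h
  refine (exp_series_hasSum_exp' (𝕂 := 𝕂) (z • p)).unique ?_
  convert h using 2 with k
  rw [hp.smul_pow, smul_add, smul_smul, smul_smul, smul_eq_mul, smul_eq_mul]

theorem Matrix.exp_fromBlocks_zero {p q 𝕜 : Type*} [RCLike 𝕜] [Fintype p] [DecidableEq p]
    [Fintype q] [DecidableEq q] (A : Matrix p p 𝕜) (B : Matrix q q 𝕜) :
    exp (fromBlocks A 0 0 B) = fromBlocks (exp A) 0 0 (exp B) := by
  let φ : Matrix p p 𝕜 × Matrix q q 𝕜 →+* Matrix (p ⊕ q) (p ⊕ q) 𝕜 :=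
    { toFun := fun x => fromBlocks x.1 0 0 x.2
      map_one' := fromBlocks_one
      map_mul' := fun x y => by simp [fromBlocks_multiply]
      map_zero' := fromBlocks_zero
      map_add' := fun x y => by simp [fromBlocks_add] }
  have hφ : Continuous φ :=
    continuous_fst.matrix_fromBlocks continuous_const continuous_const continuous_snd
  -- `exp` itself needs no norm; the operator norm only supplies convergence of the series.
  open scoped Norms.Operator in
  have hsum := ((exp_series_hasSum_exp' (𝕂 := ℚ) A).prodMk
    (exp_series_hasSum_exp' (𝕂 := ℚ) B)).map φ hφ
  calc exp (fromBlocks A 0 0 B)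
      = ∑' k : ℕ, φ ((k.factorial⁻¹ : ℚ) • A ^ k, (k.factorial⁻¹ : ℚ) • B ^ k) := by
        rw [exp_eq_tsum ℚ]
        refine tsum_congr fun k => ?_
        change _ = φ ((k.factorial⁻¹ : ℚ) • (A, B) ^ k)
        rw [map_rat_smul, map_pow]
        rfl
    _ = fromBlocks (exp A) 0 0 (exp B) := hsum.tsum_eq

theorem Matrix.exp_smul_allOnes {ι : Type*} [Fintype ι] [DecidableEq ι] {c : ℂ}
    (hc : Complex.exp (c * Fintype.card ι) = 1) : exp (c • of fun _ _ : ι => (1 : ℂ)) = 1 := by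
  rcases isEmpty_or_nonempty ι with hι | hι
  · exact Subsingleton.elim _ _
  set N : ℂ := (Fintype.card ι : ℂ)
  have hN : N ≠ 0 := Nat.cast_ne_zero.2 Fintype.card_ne_zero
  have hidem : IsIdempotentElem (N⁻¹ • of fun _ _ : ι => (1 : ℂ)) := by
    ext i j
    simp [mul_apply, N]
  have hsplit : c • of (fun _ _ : ι => (1 : ℂ)) = (c * N) • N⁻¹ • of fun _ _ => 1 := by
    rw [smul_smul, mul_assoc, mul_inv_cancel₀ hN, mul_one]
  rw [hsplit]
  open scoped Norms.Operator in
  refine (hidem.exp_smul (c * N)).trans ?_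
  rw [← Complex.exp_eq_exp_ℂ, hc, one_smul, add_sub_cancel]

theorem Matrix.IsSymm.commute_allOnes {ι R : Type*} [Fintype ι] [CommSemiring R]
    {M : Matrix ι ι R} (hM : M.IsSymm) (h : M *ᵥ (fun _ => 1) = 0) :
    Commute M (of fun _ _ => 1) := by
  have hMJ : M * of (fun _ _ => 1) = 0 := by
    ext i j
    simpa [mul_apply, mulVec, dotProduct] using congrFun h i
  have hJM : of (fun _ _ => 1) * M = 0 := by
    ext i j
    simpa [mul_apply, mulVec, dotProduct, hM.apply j] using congrFun h j
  exact hMJ.trans hJM.symm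

section transU

variable {ι : Type*} [Fintype ι] [DecidableEq ι]

theorem transU_add_of_commute {A B : Matrix ι ι ℝ} (h : Commute A B) (t : ℝ) :
    transU (A + B) t = transU A t * transU B t := by
  have hC := (h.map Complex.ofRealHom.mapMatrix).smul_left (Complex.I * t) |>.smul_right
    (Complex.I * t)
  simp only [transU, Matrix.map_add _ Complex.ofReal_add, smul_add]
  exact Matrix.exp_add_of_commute _ _ hC

theorem transU_neg (M : Matrix ι ι ℝ) (t : ℝ) : transU (-M) t = transU M (-t) := by
  simp [transU, Matrix.map_neg _ Complex.ofReal_neg]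

theorem transU_smul_one (r t : ℝ) :
    transU (r • 1 : Matrix ι ι ℝ) t = Complex.exp (Complex.I * ↑(t * r)) • 1 := by
  simp [transU, smul_one_eq_diagonal, ← diagonal_smul, exp_diagonal, ← Complex.exp_eq_exp_ℂ,
    mul_assoc]

theorem transU_allOnes {t : ℝ} (h : Complex.exp (Complex.I * ↑(t * Fintype.card ι)) = 1) :
    transU (of fun _ _ : ι => (1 : ℝ)) t = 1 := by
  have hJ : (of fun _ _ : ι => (1 : ℝ)).map Complex.ofReal = of fun _ _ => 1 := by
    ext; simp
  rw [transU, hJ]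
  exact exp_smul_allOnes (by simpa [mul_assoc] using h)

theorem transU_fromBlocks_zero {κ : Type*} [Fintype κ] [DecidableEq κ]
    (A : Matrix ι ι ℝ) (B : Matrix κ κ ℝ) (t : ℝ) :
    transU (fromBlocks A 0 0 B) t = fromBlocks (transU A t) 0 0 (transU B t) := by
  simp [transU, fromBlocks_map, fromBlocks_smul, exp_fromBlocks_zero]

theorem transU_card_smul_one_sub_allOnes_sub
    {D : Matrix ι ι ℝ} (hD : Commute D (of fun _ _ => 1)) {t : ℝ}
    (ht : ∃ z : ℤ, t * Fintype.card ι = 2 * Real.pi * z) :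
    transU ((Fintype.card ι : ℝ) • 1 - of (fun _ _ => 1) - D) (-t) = transU D t := by
  obtain ⟨z, hz⟩ := ht
  have hper : Complex.exp (Complex.I * ↑(t * Fintype.card ι)) = 1 := by
    rw [hz, Complex.exp_eq_one_iff]
    exact ⟨z, by push_cast; ring⟩
  have hper' : Complex.exp (Complex.I * ↑(t * -(Fintype.card ι : ℝ))) = 1 := by
    rw [mul_neg, Complex.ofReal_neg, mul_neg, Complex.exp_neg, hper, inv_one]
  have hsplit : -((Fintype.card ι : ℝ) • 1 - of (fun _ _ => 1) - D)
      = D + of (fun _ _ => 1) + (-(Fintype.card ι : ℝ)) • 1 := by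
    rw [neg_smul]; abel
  rw [← transU_neg, hsplit, transU_add_of_commute ((Commute.one_right _).smul_right _),
    transU_add_of_commute hD, transU_allOnes hper, transU_smul_one, hper', one_smul, mul_one,
    mul_one]

end transU

namespace SimpleGraph

variable {V W : Type*} [Fintype V] [DecidableEq V] [Fintype W] [DecidableEq W]
  (G : SimpleGraph V) [DecidableRel G.Adj] (H : SimpleGraph W) [DecidableRel H.Adj]

theorem lapMatrix_compl (R : Type*) [Ring R] :
    Gᶜ.lapMatrix R = (Fintype.card V : R) • 1 - of (fun _ _ => 1) - G.lapMatrix R := by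
  ext i j
  by_cases hij : i = j
  · subst hij
    have hdeg : Gᶜ.degree i + G.degree i + 1 = Fintype.card V := by
      have := G.degree_lt_card_verts i
      rw [degree_compl]
      omega
    simp [lapMatrix, degMatrix, ← hdeg]
  · by_cases hadj : G.Adj i j <;> simp [lapMatrix, degMatrix, hij, hadj]

theorem join_lapMatrix_eq (R : Type*) [Ring R] :
    fromBlocks (G.lapMatrix R + (Fintype.card W : R) • 1) (of fun _ _ => -1)
        (of fun _ _ => -1) (H.lapMatrix R + (Fintype.card V : R) • 1)
      = (Fintype.card (V ⊕ W) : R) • 1 - of (fun _ _ => 1)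
          - fromBlocks (Gᶜ.lapMatrix R) 0 0 (Hᶜ.lapMatrix R) := by
  rw [lapMatrix_compl, lapMatrix_compl, Fintype.card_sum]
  ext (i | i) (j | j) <;> simp [one_apply] <;> split_ifs <;> abel

theorem commute_fromBlocks_lapMatrix_allOnes (R : Type*) [CommRing R] :
    Commute (fromBlocks (G.lapMatrix R) 0 0 (H.lapMatrix R)) (of fun _ _ => 1) := by
  refine ((G.isSymm_lapMatrix R).fromBlocks transpose_zero
    (H.isSymm_lapMatrix R)).commute_allOnes ?_
  rw [fromBlocks_mulVec]
  simp [Function.comp_def, lapMatrix_mulVec_const_eq_zero]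

end SimpleGraph

theorem join_laplacian_FR_general {n m : ℕ}
    (G : SimpleGraph (Fin n)) [DecidableRel G.Adj]
    (H : SimpleGraph (Fin m)) [DecidableRel H.Adj]
    (u v : Fin n → ℝ)
    (τ : ℝ) (α β : ℂ)
    (hτ : ∃ z : ℤ, τ * ((n : ℝ) + (m : ℝ)) = 2 * Real.pi * z)
    (hfr : (transU ((n : ℝ) • (1 : Matrix (Fin n) (Fin n) ℝ) - Matrix.of (fun _ _ => (1 : ℝ))
        - G.lapMatrix ℝ) τ) *ᵥ cVec u = α • cVec u + β • cVec v) :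
    (transU (Matrix.fromBlocks (G.lapMatrix ℝ + (m : ℝ) • (1 : Matrix (Fin n) (Fin n) ℝ))
          (Matrix.of fun _ _ => (-1 : ℝ)) (Matrix.of fun _ _ => (-1 : ℝ))
          (H.lapMatrix ℝ + (n : ℝ) • (1 : Matrix (Fin m) (Fin m) ℝ))) (-τ))
        *ᵥ Sum.elim (cVec u) (0 : Fin m → ℂ)
      = α • Sum.elim (cVec u) (0 : Fin m → ℂ) + β • Sum.elim (cVec v) (0 : Fin m → ℂ) := by
  have hjoin := G.join_lapMatrix_eq H ℝ
  have hcompl := G.lapMatrix_compl ℝ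
  simp only [Fintype.card_fin] at hjoin hcompl
  rw [← hcompl] at hfr
  rw [hjoin, transU_card_smul_one_sub_allOnes_sub (Gᶜ.commute_fromBlocks_lapMatrix_allOnes Hᶜ ℝ)
    (by simpa using hτ), transU_fromBlocks_zero, fromBlocks_mulVec]
  ext (i | i) <;> simp [hfr]

/-- if the complement of `G` has Laplacian fractional revival from `u` to `v`
at time `τ` with `τ(n+m) ∈ 2πℤ`, then the join `G + H` has Laplacian fractional revival
from `[uᵀ 0]ᵀ` to `[vᵀ 0]ᵀ` at time `−τ`. -/
theorem join_laplacian_FR {n m : ℕ}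
    (G : SimpleGraph (Fin n)) [DecidableRel G.Adj]
    (H : SimpleGraph (Fin m)) [DecidableRel H.Adj]
    (u v : Fin n → ℝ) (hu : u ⬝ᵥ u = 1) (hv : v ⬝ᵥ v = 1)
    (hli : LinearIndependent ℝ ![u, v])
    (τ : ℝ) (α β : ℂ) (hβ : β ≠ 0)
    (hτ : ∃ z : ℤ, τ * ((n : ℝ) + (m : ℝ)) = 2 * Real.pi * z)
    (hfr : (transU ((n : ℝ) • (1 : Matrix (Fin n) (Fin n) ℝ) - Matrix.of (fun _ _ => (1 : ℝ))
        - G.lapMatrix ℝ) τ) *ᵥ cVec u = α • cVec u + β • cVec v) :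
    (transU (Matrix.fromBlocks (G.lapMatrix ℝ + (m : ℝ) • (1 : Matrix (Fin n) (Fin n) ℝ))
          (Matrix.of fun _ _ => (-1 : ℝ)) (Matrix.of fun _ _ => (-1 : ℝ))
          (H.lapMatrix ℝ + (n : ℝ) • (1 : Matrix (Fin m) (Fin m) ℝ))) (-τ))
        *ᵥ Sum.elim (cVec u) (0 : Fin m → ℂ)
      = α • Sum.elim (cVec u) (0 : Fin m → ℂ) + β • Sum.elim (cVec v) (0 : Fin m → ℂ) :=
  join_laplacian_FR_general G H u v τ α β hτ hfr
end

section
/- Let n be an even positive integer, let S ⊆ (ℤ/nℤ) \ {0} satisfy S = −S, and let a, b ∈ ℤ/nℤ be distinct vertices with a − b ≠ n/2 in ℤ/nℤ. If the circulant graph Cay(ℤ/nℤ, S) exhibits pretty good plus state transfer between (e_a + e_b)/√2 and a linearly independent plus state (e_c + e_d)/√2 with respect to its adjacency matrix, then e_c + e_d = e_{a + n/2} + e_{b + n/2}. -/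
open Matrix Filter

/-!
The characters `χ_k(j) = ω^{kj}` of `ℤ/n` are eigenvectors of the symmetric matrix `A` with real
eigenvalues `λ_k = λ_{-k}`. Since `exp(itA)` is symmetric, pairing `exp(itA)(e_a + e_b)` with `χ_k`
only multiplies `χ_k(a) + χ_k(b)` by the phase `e^{itλ_k}`. Pretty good transfer therefore forces
`|χ_k(a) + χ_k(b)| = |χ_k(c) + χ_k(d)|` for every `k`, and orthogonality of characters turns this
into `c - d = ±(a - b)`, because `a - b` is not of order two. So `{c, d} = {a + p, b + p}`, and
comparing `k = 1` with `k = -1`, which share the phase, gives `χ_1(p) = χ_1(-p)`, i.e. `2p = 0`.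
Linear independence excludes `p = 0`, leaving `p = n/2`.
-/

open scoped Topology

section Exponential

attribute [local instance] Matrix.linftyOpNormedAddCommGroup Matrix.linftyOpNormedRing
  Matrix.linftyOpNormedAlgebra

theorem Matrix.exp_mulVec_of_mulVec_eq_smul {ι 𝕂 : Type*} [Fintype ι] [DecidableEq ι] [RCLike 𝕂]
    {M : Matrix ι ι 𝕂} {v : ι → 𝕂} {μ : 𝕂} (h : M *ᵥ v = μ • v) :
    NormedSpace.exp M *ᵥ v = NormedSpace.exp μ • v := by
  have hpow (k : ℕ) : M ^ k *ᵥ v = μ ^ k • v := by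
    induction k with
    | zero => simp
    | succ k ih => rw [pow_succ', ← mulVec_mulVec, ih, mulVec_smul, h, smul_smul, pow_succ]
  let L : Matrix ι ι 𝕂 →+ (ι → 𝕂) := AddMonoidHom.mk' (· *ᵥ v) fun A B => add_mulVec A B v
  have hM := (NormedSpace.exp_series_hasSum_exp' (𝕂 := 𝕂) M).map L
    (continuous_id.matrix_mulVec continuous_const)
  have hμ := (NormedSpace.exp_series_hasSum_exp' (𝕂 := 𝕂) μ).smul_const v
  refine hM.unique (hμ.congr_fun fun k => ?_)
  simp [L, smul_mulVec, hpow, smul_smul]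

end Exponential

section TransitionMatrix

variable {ι : Type*} [Fintype ι] [DecidableEq ι]

theorem transU_isSymm {M : Matrix ι ι ℝ} (hM : M.IsSymm) (t : ℝ) : (transU M t).IsSymm :=
  ((hM.map _).smul _).exp

theorem transU_mulVec_of_mulVec_eq_smul {M : Matrix ι ι ℝ} {w : ι → ℂ} {μ : ℂ}
    (hw : M.map Complex.ofReal *ᵥ w = μ • w) (t : ℝ) :
    transU M t *ᵥ w = Complex.exp (Complex.I * t * μ) • w := by
  rw [transU, Complex.exp_eq_exp_ℂ]
  exact Matrix.exp_mulVec_of_mulVec_eq_smul (by rw [smul_mulVec, hw, smul_smul])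

theorem dotProduct_transU_mulVec {M : Matrix ι ι ℝ} (hM : M.IsSymm) {w : ι → ℂ} {μ : ℂ}
    (hw : M.map Complex.ofReal *ᵥ w = μ • w) (t : ℝ) (v : ι → ℂ) :
    w ⬝ᵥ (transU M t *ᵥ v) = Complex.exp (Complex.I * t * μ) * (w ⬝ᵥ v) := by
  rw [dotProduct_mulVec, ← (transU_isSymm hM t).eq, vecMul_transpose,
    transU_mulVec_of_mulVec_eq_smul hw, smul_dotProduct, smul_eq_mul]

theorem tendsto_exp_mul_dotProduct {M : Matrix ι ι ℝ} (hM : M.IsSymm) {u v : ι → ℂ}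
    {t : ℕ → ℝ} {γ : ℂ} (hlim : Tendsto (fun k => transU M (t k) *ᵥ u) atTop (𝓝 (γ • v)))
    {w : ι → ℂ} {μ : ℂ} (hw : M.map Complex.ofReal *ᵥ w = μ • w) :
    Tendsto (fun k => Complex.exp (Complex.I * t k * μ) * (w ⬝ᵥ u)) atTop
      (𝓝 (γ * (w ⬝ᵥ v))) := by
  have := (((continuous_const (y := w)).dotProduct continuous_id).tendsto _).comp hlim
  simpa [Function.comp_def, dotProduct_transU_mulVec hM hw] using this

theorem dotProduct_eVec_add (w : ι → ℂ) (x y : ι) : w ⬝ᵥ (eVec x + eVec y) = w x + w y := by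
  simp [dotProduct, eVec, mul_add, Finset.sum_add_distrib]

namespace PGST

variable {M : Matrix ι ι ℝ} {u v : ι → ℂ}

theorem smul (h : PGST M u v) (c : ℂ) : PGST M (c • u) (c • v) := by
  obtain ⟨t, γ, hγ, hlim⟩ := h
  exact ⟨t, γ, hγ, by simpa [mulVec_smul, smul_comm γ c] using hlim.const_smul c⟩

theorem eVec_add_of_plusState {a b c d : ι} (h : PGST M (plusState a b) (plusState c d)) :
    PGST M (eVec a + eVec b) (eVec c + eVec d) := by
  have h2 : (Real.sqrt 2 : ℂ) ≠ 0 := by norm_num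
  simpa [plusState, smul_smul, h2] using h.smul (Real.sqrt 2 : ℂ)

theorem norm_dotProduct_eq (h : PGST M u v) (hM : M.IsSymm) {w : ι → ℂ} {μ : ℂ}
    (hw : M.map Complex.ofReal *ᵥ w = μ • w) (hμ : μ.im = 0) : ‖w ⬝ᵥ u‖ = ‖w ⬝ᵥ v‖ := by
  obtain ⟨t, γ, hγ, hlim⟩ := h
  simpa [Complex.norm_exp, Complex.mul_re, hμ, hγ] using
    (tendsto_exp_mul_dotProduct hM hlim hw).norm

theorem dotProduct_mul_dotProduct_eq (h : PGST M u v) (hM : M.IsSymm) {w₁ w₂ : ι → ℂ} {μ : ℂ}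
    (hw₁ : M.map Complex.ofReal *ᵥ w₁ = μ • w₁) (hw₂ : M.map Complex.ofReal *ᵥ w₂ = μ • w₂) :
    (w₁ ⬝ᵥ v) * (w₂ ⬝ᵥ u) = (w₂ ⬝ᵥ v) * (w₁ ⬝ᵥ u) := by
  obtain ⟨t, γ, hγ, hlim⟩ := h
  have h₁ := (tendsto_exp_mul_dotProduct hM hlim hw₁).mul_const (w₂ ⬝ᵥ u)
  have h₂ := (tendsto_exp_mul_dotProduct hM hlim hw₂).mul_const (w₁ ⬝ᵥ u)
  have hγ₀ : γ ≠ 0 := norm_ne_zero_iff.mp (by simp [hγ])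
  have := tendsto_nhds_unique h₁ (h₂.congr fun k => by ring)
  exact mul_left_cancel₀ hγ₀ (by linear_combination this)

end PGST

end TransitionMatrix

namespace AddChar

theorem eq_or_eq_neg_of_forall_apply_mul_add_apply_neg_eq {R K : Type*} [CommRing R] [Fintype R]
    [DecidableEq R] [CommRing K] [IsDomain K] [CharZero K] {ψ : AddChar R K} (hψ : ψ.IsPrimitive)
    {δ ε : R} (hδ : δ + δ ≠ 0)
    (h : ∀ k, ψ (k * δ) + ψ (-(k * δ)) = ψ (k * ε) + ψ (-(k * ε))) : ε = δ ∨ ε = -δ := by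
  have expand (z k : R) :
      (ψ (k * z) + ψ (-(k * z))) * ψ (k * -δ) = ψ (k * (z - δ)) + ψ (k * (-z - δ)) := by
    rw [add_mul, ← map_add_eq_mul, ← map_add_eq_mul]
    ring_nf
  -- Multiply by `ψ (-(kδ))` and sum over `k`: by orthogonality the left side is `#R`, the right
  -- side `#R * ([ε = δ] + [-ε = δ])`.
  by_contra! hne
  have h₁ : ε - δ ≠ 0 := sub_ne_zero.mpr hne.1
  have h₂ : -ε - δ ≠ 0 := by rw [Ne, sub_eq_zero, neg_eq_iff_eq_neg]; exact hne.2
  have h₃ : -δ - δ ≠ 0 := by rwa [← neg_add', neg_ne_zero]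
  have hsum := Fintype.sum_congr _ _ fun k => congrArg (· * ψ (k * -δ)) (h k)
  simp only [expand, Finset.sum_add_distrib, sum_mulShift _ hψ, sub_self, h₁, h₂, h₃,
    ↓reduceIte] at hsum
  simp at hsum

theorem norm_apply_add_apply_sq {G : Type*} [AddCommGroup G] [Finite G] (ψ : AddChar G ℂ)
    (x y : G) : ((‖ψ x + ψ y‖ ^ 2 : ℝ) : ℂ) = 2 + ψ (x - y) + ψ (-(x - y)) := by
  have hmul (p q : G) : ψ p * ψ (-q) = ψ (p - q) := by rw [← map_add_eq_mul, sub_eq_add_neg]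
  rw [Complex.ofReal_pow, ← Complex.mul_conj', map_add, ← map_neg_eq_conj, ← map_neg_eq_conj]
  calc (ψ x + ψ y) * (ψ (-x) + ψ (-y))
      = ψ x * ψ (-x) + ψ y * ψ (-y) + ψ x * ψ (-y) + ψ y * ψ (-x) := by ring
    _ = 2 + ψ (x - y) + ψ (-(x - y)) := by
      simp only [hmul, sub_self, map_zero_eq_one, neg_sub]
      ring

theorem apply_add_apply_ne_zero {G K : Type*} [AddCommGroup G] [Field K] {ψ : AddChar G K}
    (hψ : Function.Injective ψ) {a b : G} (hab : (a - b) + (a - b) ≠ 0) : ψ a + ψ b ≠ 0 := by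
  intro h
  have hψab : ψ (a - b) = -1 := by
    rw [map_sub_eq_div, eq_neg_of_add_eq_zero_left h, neg_div, div_self (ψ.val_isUnit b).ne_zero]
  exact hab (hψ (by rw [map_add_eq_mul, hψab, map_zero_eq_one]; ring))

theorem add_self_eq_zero_of_translate {G K : Type*} [AddCommGroup G] [Field K] {ψ : AddChar G K}
    (hψ : Function.Injective ψ) {a b p : G} (hab : (a - b) + (a - b) ≠ 0)
    (h : (ψ (a + p) + ψ (b + p)) * (ψ (-a) + ψ (-b)) =
      (ψ (-(a + p)) + ψ (-(b + p))) * (ψ a + ψ b)) : p + p = 0 := by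
  have hF := apply_add_apply_ne_zero hψ hab
  have hF' := apply_add_apply_ne_zero hψ (a := -a) (b := -b)
    (by rwa [show -a - -b + (-a - -b) = -((a - b) + (a - b)) by abel, neg_ne_zero])
  have hprod : (ψ p - ψ (-p)) * ((ψ a + ψ b) * (ψ (-a) + ψ (-b))) = 0 := by
    simp only [map_add_eq_mul, neg_add] at h
    linear_combination h
  have hp : ψ p = ψ (-p) :=
    sub_eq_zero.mp ((mul_eq_zero.mp hprod).resolve_right (mul_ne_zero hF hF'))
  apply hψ
  rw [map_add_eq_mul, map_zero_eq_one]
  nth_rewrite 2 [hp]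
  rw [← map_add_eq_mul, add_neg_cancel, map_zero_eq_one]

end AddChar

theorem ZMod.eq_zero_or_eq_half_of_add_self_eq_zero {n : ℕ} [NeZero n] (hn : Even n)
    {x : ZMod n} (hx : x + x = 0) : x = 0 ∨ x = ((n / 2 : ℕ) : ZMod n) := by
  rw [← ZMod.natCast_zmod_val x, ← Nat.cast_add, ZMod.natCast_eq_zero_iff] at hx
  obtain ⟨k, hk⟩ := hx
  have hlt := x.val_lt
  have hk2 : k < 2 := by nlinarith
  obtain ⟨m, rfl⟩ := hn
  rw [← ZMod.natCast_zmod_val x]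
  interval_cases k
  · left; simp [show x.val = 0 by omega]
  · right; congr 1; omega

theorem Finset.sum_comp_neg_of_neg_mem {G M : Type*} [InvolutiveNeg G] [AddCommMonoid M]
    {S : Finset G} (hS : ∀ s ∈ S, -s ∈ S) (f : G → M) : ∑ s ∈ S, f (-s) = ∑ s ∈ S, f s :=
  Finset.sum_nbij' (-·) (-·) hS hS (fun s _ => neg_neg s) (fun s _ => neg_neg s) fun _ _ => rfl

section Circulant

variable {n : ℕ} {S : Finset (ZMod n)}

theorem cayA_isSymm (hS : ∀ s ∈ S, -s ∈ S) : (cayA n S).IsSymm := by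
  ext x y
  simp only [transpose_apply, cayA, of_apply]
  congr 1
  exact propext ⟨fun h => by simpa using hS _ h, fun h => by simpa using hS _ h⟩

theorem cayA_map_mulVec_addChar [NeZero n] (ψ : AddChar (ZMod n) ℂ) :
    (cayA n S).map Complex.ofReal *ᵥ ψ = (∑ s ∈ S, ψ (-s)) • ⇑ψ := by
  ext x
  rw [mulVec, dotProduct, ← (Equiv.subLeft x).sum_comp]
  simp [cayA, apply_ite, Finset.sum_ite_mem, Finset.mul_sum, ← AddChar.map_add_eq_mul, mul_comm,
    sub_eq_add_neg]

theorem im_sum_addChar_neg [NeZero n] (hS : ∀ s ∈ S, -s ∈ S) (ψ : AddChar (ZMod n) ℂ) :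
    (∑ s ∈ S, ψ (-s)).im = 0 := by
  rw [← Complex.conj_eq_iff_im, map_sum]
  simp_rw [← AddChar.map_neg_eq_conj, neg_neg]
  exact (Finset.sum_comp_neg_of_neg_mem hS _).symm

end Circulant

namespace PGST

variable {n : ℕ} [NeZero n] {S : Finset (ZMod n)} {a b c d : ZMod n}

theorem cayA_sub_eq_or_sub_eq_neg (h : PGST (cayA n S) (eVec a + eVec b) (eVec c + eVec d))
    (hS : ∀ s ∈ S, -s ∈ S) (hab : (a - b) + (a - b) ≠ 0) :
    c - d = a - b ∨ c - d = -(a - b) := by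
  set ψ : AddChar (ZMod n) ℂ := ZMod.stdAddChar
  refine AddChar.eq_or_eq_neg_of_forall_apply_mul_add_apply_neg_eq
    (ZMod.isPrimitive_stdAddChar n) hab fun k => ?_
  have hnorm := h.norm_dotProduct_eq (cayA_isSymm hS) (cayA_map_mulVec_addChar (ψ.mulShift k))
    (im_sum_addChar_neg hS _)
  simp only [dotProduct_eVec_add, AddChar.mulShift_apply] at hnorm
  have := congrArg (fun r : ℝ => ((r ^ 2 : ℝ) : ℂ)) hnorm
  simpa only [AddChar.norm_apply_add_apply_sq, mul_sub, add_assoc, add_right_inj] using this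

theorem cayA_add_self_eq_zero {p : ZMod n}
    (h : PGST (cayA n S) (eVec a + eVec b) (eVec (a + p) + eVec (b + p)))
    (hS : ∀ s ∈ S, -s ∈ S) (hab : (a - b) + (a - b) ≠ 0) : p + p = 0 := by
  set ψ : AddChar (ZMod n) ℂ := ZMod.stdAddChar
  have hinv : ∑ s ∈ S, ψ⁻¹ (-s) = ∑ s ∈ S, ψ (-s) := by
    simpa using (Finset.sum_comp_neg_of_neg_mem hS ψ).symm
  have := h.dotProduct_mul_dotProduct_eq (cayA_isSymm hS) (cayA_map_mulVec_addChar ψ)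
    (hinv ▸ cayA_map_mulVec_addChar ψ⁻¹)
  refine AddChar.add_self_eq_zero_of_translate ZMod.injective_stdAddChar hab ?_
  simpa only [dotProduct_eVec_add, AddChar.inv_apply] using this

theorem cayA_eq_or_eq_half (heven : Even n)
    (h : PGST (cayA n S) (eVec a + eVec b) (eVec c + eVec d))
    (hS : ∀ s ∈ S, -s ∈ S) (hab : (a - b) + (a - b) ≠ 0) :
    eVec c + eVec d = eVec a + eVec b ∨
      eVec c + eVec d = eVec (a + ((n / 2 : ℕ) : ZMod n)) + eVec (b + ((n / 2 : ℕ) : ZMod n)) := by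
  obtain ⟨p, hp⟩ : ∃ p, eVec c + eVec d = eVec (a + p) + eVec (b + p) := by
    rcases h.cayA_sub_eq_or_sub_eq_neg hS hab with hcd | hcd
    · exact ⟨c - a, by rw [show a + (c - a) = c by abel, show b + (c - a) = d by
        linear_combination hcd]⟩
    · exact ⟨d - a, by rw [show a + (d - a) = d by abel, show b + (d - a) = c by
        linear_combination -hcd, add_comm]⟩
  rw [hp] at h ⊢
  rcases ZMod.eq_zero_or_eq_half_of_add_self_eq_zero heven (h.cayA_add_self_eq_zero hS hab)
    with rfl | rfl
  · simp
  · exact Or.inr rfl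

end PGST

theorem plus_pgst_nonantipodal_target_general (n : ℕ) [NeZero n] (heven : Even n)
    (S : Finset (ZMod n)) (hS : ∀ s ∈ S, -s ∈ S)
    (a b c d : ZMod n) (hab : a ≠ b) (hnanti : a - b ≠ ((n / 2 : ℕ) : ZMod n))
    (hli : LinearIndependent ℂ ![plusState a b, plusState c d])
    (hpgst : PGST (cayA n S) (plusState a b) (plusState c d)) :
    eVec c + eVec d = eVec (a + ((n / 2 : ℕ) : ZMod n)) + eVec (b + ((n / 2 : ℕ) : ZMod n)) := by
  have hδ : (a - b) + (a - b) ≠ 0 := fun h =>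
    (ZMod.eq_zero_or_eq_half_of_add_self_eq_zero heven h).elim (sub_ne_zero.mpr hab) hnanti
  refine (hpgst.eVec_add_of_plusState.cayA_eq_or_eq_half heven hS hδ).resolve_left fun h => ?_
  exact hli.injective.ne (show (0 : Fin 2) ≠ 1 by decide) (by simp [plusState, h])

/-- in an even circulant graph, plus PGST from a non-antipodal plus state
`(e_a+e_b)/√2` can only go to `(e_{a+n/2}+e_{b+n/2})/√2`. -/
theorem plus_pgst_nonantipodal_target (n : ℕ) [NeZero n] (heven : Even n)
    (S : Finset (ZMod n)) (h0 : (0 : ZMod n) ∉ S) (hS : ∀ s ∈ S, -s ∈ S)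
    (a b c d : ZMod n) (hab : a ≠ b) (hnanti : a - b ≠ ((n / 2 : ℕ) : ZMod n))
    (hcd : c ≠ d)
    (hli : LinearIndependent ℂ ![plusState a b, plusState c d])
    (hpgst : PGST (cayA n S) (plusState a b) (plusState c d)) :
    eVec c + eVec d = eVec (a + ((n / 2 : ℕ) : ZMod n)) + eVec (b + ((n / 2 : ℕ) : ZMod n)) :=
  plus_pgst_nonantipodal_target_general n heven S hS a b c d hab hnanti hli hpgst
end

section
/- Let n be an even positive integer, let S ⊆ (ℤ/nℤ) \ {0} satisfy S = −S, and let a, b ∈ ℤ/nℤ be antipodal vertices, i.e. a − b = n/2 in ℤ/nℤ. If the circulant graph Cay(ℤ/nℤ, S) exhibits pretty good plus state transfer from (e_a + e_b)/√2 to some linearly independent plus state (e_c + e_d)/√2 with respect to its adjacency matrix, then 4 divides n and e_c + e_d = e_{a + n/4} + e_{b + n/4}; in particular pretty good state transfer occurs between (e_a + e_b)/√2 and (e_{a+n/4} + e_{b+n/4})/√2. -/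
open Matrix Filter

/-!
The translation `x ↦ x + n/2` and the reflection `x ↦ a + b - x` are automorphisms of the
circulant graph swapping `a` and `b`. Their permutation matrices commute with `U(t)` and fix the
plus state of `{a, b}`, so by continuity they fix every PGST target as well: `{c, d}` is invariant
under both. The translation gives `d = c + n/2`; the reflection then gives
`2(c - a) ∈ {0, n/2}`. The case `0` means `{c, d} = {a, b}`, excluded by linear independence;
the case `n/2` forces `4 ∣ n` and `c - a ∈ {n/4, n/4 + n/2}`.
-/

section Symmetry

variable {ι : Type*} [DecidableEq ι]

theorem eVec_comp_symm (σ : Equiv.Perm ι) (x : ι) : eVec x ∘ σ.symm = eVec (σ x) := by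
  ext j
  simp only [Function.comp_apply, eVec, Equiv.symm_apply_eq]

theorem plusState_comp_symm (σ : Equiv.Perm ι) (x y : ι) :
    plusState x y ∘ σ.symm = plusState (σ x) (σ y) := by
  ext j
  simp only [plusState, Function.comp_apply, Pi.smul_apply, Pi.add_apply,
    ← eVec_comp_symm σ]

theorem plusState_comm (x y : ι) : plusState x y = plusState y x := by
  rw [plusState, plusState, add_comm]

theorem eVec_add_eVec_of_plusState_eq {x y x' y' : ι} (h : plusState x y = plusState x' y') :
    eVec x + eVec y = eVec x' + eVec y' :=
  smul_right_injective _ (by simp) h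

theorem eq_or_eq_of_eVec_add_eVec_eq {x y x' y' : ι} (hxy : x ≠ y)
    (h : eVec x + eVec y = eVec x' + eVec y') : x = x' ∨ x = y' := by
  by_contra! hne
  simpa [eVec, hxy, hne.1, hne.2] using congrFun h x

variable [Fintype ι]

theorem commute_permMatrix {R : Type*} [NonAssocSemiring R] {σ : Equiv.Perm ι}
    {N : Matrix ι ι R} (hN : ∀ i j, N (σ i) (σ j) = N i j) :
    Commute (σ.permMatrix R) N := by
  ext i j
  rw [PEquiv.toMatrix_toPEquiv_mul, PEquiv.mul_toMatrix_toPEquiv, submatrix_apply,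
    submatrix_apply, id, id, ← hN i (σ.symm j), Equiv.apply_symm_apply]

theorem transU_mulVec_comp_perm {M : Matrix ι ι ℝ} {σ : Equiv.Perm ι}
    (hM : ∀ i j, M (σ i) (σ j) = M i j) {u : ι → ℂ} (hu : u ∘ σ = u) (t : ℝ) :
    (transU M t *ᵥ u) ∘ σ = transU M t *ᵥ u := by
  have hP : Commute (σ.permMatrix ℂ) (transU M t) :=
    ((commute_permMatrix (N := M.map Complex.ofReal) (by simp [hM])).smul_right _).exp_right
  rw [← PEquiv.toMatrix_toPEquiv_mulVec, mulVec_mulVec, hP.eq, ← mulVec_mulVec,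
    PEquiv.toMatrix_toPEquiv_mulVec, hu]

theorem PGST.comp_perm {M : Matrix ι ι ℝ} {σ : Equiv.Perm ι}
    (hM : ∀ i j, M (σ i) (σ j) = M i j) {u v : ι → ℂ} (hu : u ∘ σ = u) (h : PGST M u v) :
    v ∘ σ = v := by
  obtain ⟨t, γ, hγ, hlim⟩ := h
  have hcomp : Continuous fun w : ι → ℂ => w ∘ σ := continuous_pi fun i => continuous_apply (σ i)
  have hlimσ : Tendsto (fun k => transU M (t k) *ᵥ u) atTop (nhds ((γ • v) ∘ σ)) :=
    ((hcomp.tendsto _).comp hlim).congr fun k => transU_mulVec_comp_perm hM hu (t k)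
  have hγ0 : γ ≠ 0 := by rintro rfl; simp at hγ
  exact smul_right_injective _ hγ0 (tendsto_nhds_unique hlimσ hlim)

theorem PGST.plusState_swap_mem {M : Matrix ι ι ℝ} {σ : Equiv.Perm ι}
    (hM : ∀ i j, M (σ i) (σ j) = M i j) {a b c d : ι} (hσa : σ a = b) (hσb : σ b = a)
    (hcd : c ≠ d) (h : PGST M (plusState a b) (plusState c d)) : σ c = c ∨ σ c = d := by
  have hM' : ∀ i j, M (σ.symm i) (σ.symm j) = M i j := fun i j => by
    rw [← hM, Equiv.apply_symm_apply, Equiv.apply_symm_apply]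
  have hfix := h.comp_perm hM' (by rw [plusState_comp_symm, hσa, hσb, plusState_comm])
  rw [plusState_comp_symm] at hfix
  exact eq_or_eq_of_eVec_add_eVec_eq (σ.injective.ne hcd) (eVec_add_eVec_of_plusState_eq hfix)

end Symmetry

theorem eVec_add_eVec_add_eq {G : Type*} [AddGroup G] [DecidableEq G] {h c x : G}
    (hh : h + h = 0) (hc : c = x ∨ c = x + h) :
    eVec c + eVec (c + h) = eVec x + eVec (x + h) := by
  rcases hc with rfl | rfl
  · rfl
  · rw [add_assoc, hh, add_zero, add_comm]

namespace ZMod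

variable {n : ℕ}

theorem val_add_self_cases [NeZero n] (x : ZMod n) :
    (x + x).val = x.val + x.val ∨ (x + x).val + n = x.val + x.val := by
  by_cases hle : n ≤ x.val + x.val
  · exact Or.inr (val_add_val_of_le hle).symm
  · exact Or.inl (val_add_of_lt (not_le.mp hle))

theorem half_add_half (hn : Even n) :
    ((n / 2 : ℕ) : ZMod n) + ((n / 2 : ℕ) : ZMod n) = 0 := by
  rw [← Nat.cast_add, ← two_mul, Nat.mul_div_cancel' (even_iff_two_dvd.mp hn),
    natCast_self]

theorem eq_zero_or_eq_half_of_add_self_eq_zero_s11 [NeZero n] (hn : Even n) {x : ZMod n}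
    (hx : x + x = 0) : x = 0 ∨ x = ((n / 2 : ℕ) : ZMod n) := by
  have hn2 := Nat.even_iff.mp hn
  have hlt := x.val_lt
  have hval : x.val = 0 ∨ x.val = n / 2 := by
    rcases x.val_add_self_cases with h | h <;> rw [hx, val_zero] at h <;> omega
  rw [← natCast_zmod_val x]
  rcases hval with h | h <;> simp [h]

theorem four_dvd_and_eq_of_add_self_eq_half [NeZero n] (hn : Even n) {x : ZMod n}
    (hx : x + x = ((n / 2 : ℕ) : ZMod n)) :
    4 ∣ n ∧ (x = ((n / 4 : ℕ) : ZMod n) ∨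
      x = ((n / 4 : ℕ) : ZMod n) + ((n / 2 : ℕ) : ZMod n)) := by
  have hn2 := Nat.even_iff.mp hn
  have hlt := x.val_lt
  have hhalf : ((n / 2 : ℕ) : ZMod n).val = n / 2 :=
    val_natCast_of_lt (Nat.div_lt_self (Nat.pos_of_neZero n) one_lt_two)
  have hval : n % 4 = 0 ∧ (x.val = n / 4 ∨ x.val = n / 4 + n / 2) := by
    rcases x.val_add_self_cases with h | h <;> rw [hx, hhalf] at h <;> omega
  refine ⟨Nat.dvd_of_mod_eq_zero hval.1, ?_⟩
  rw [← natCast_zmod_val x]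
  rcases hval.2 with h | h <;> simp [h]

end ZMod

section Circulant

variable {n : ℕ}

theorem cayA_add_add (S : Finset (ZMod n)) (x i j : ZMod n) :
    cayA n S (i + x) (j + x) = cayA n S i j := by
  simp only [cayA, of_apply, add_sub_add_right_eq_sub]

theorem cayA_sub_sub {S : Finset (ZMod n)} (hS : ∀ s ∈ S, -s ∈ S) (x i j : ZMod n) :
    cayA n S (x - i) (x - j) = cayA n S i j := by
  have hneg : -(i - j) ∈ S ↔ i - j ∈ S := ⟨fun h => neg_neg (i - j) ▸ hS _ h, hS _⟩
  simp only [cayA, of_apply, show x - i - (x - j) = -(i - j) by abel, hneg]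

end Circulant

theorem plus_pgst_antipodal_target_general (n : ℕ) [NeZero n] (heven : Even n)
    (S : Finset (ZMod n)) (hS : ∀ s ∈ S, -s ∈ S)
    (a b c d : ZMod n) (hab : a ≠ b) (hanti : a - b = ((n / 2 : ℕ) : ZMod n))
    (hcd : c ≠ d)
    (hli : LinearIndependent ℂ ![plusState a b, plusState c d])
    (hpgst : PGST (cayA n S) (plusState a b) (plusState c d)) :
    4 ∣ n ∧
    eVec c + eVec d = eVec (a + ((n / 4 : ℕ) : ZMod n)) + eVec (b + ((n / 4 : ℕ) : ZMod n)) ∧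
    PGST (cayA n S) (plusState a b)
      (plusState (a + ((n / 4 : ℕ) : ZMod n)) (b + ((n / 4 : ℕ) : ZMod n))) := by
  set half : ZMod n := ((n / 2 : ℕ) : ZMod n)
  set quarter : ZMod n := ((n / 4 : ℕ) : ZMod n)
  have hhalf : half + half = 0 := ZMod.half_add_half heven
  have hb : b = a + half := by linear_combination -hanti - hhalf
  have hd : d = c + half := by
    rcases hpgst.plusState_swap_mem (σ := Equiv.addRight half) (cayA_add_add S half) hb.symm
      (by simp [hb, add_assoc, hhalf]) hcd with hc | hc <;> simp only [Equiv.coe_addRight] at hc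
    · exact absurd (add_eq_left.mp hc) fun h0 => hab (by linear_combination hanti + h0)
    · exact hc.symm
  subst hb hd
  rcases hpgst.plusState_swap_mem (σ := Equiv.subLeft (a + (a + half))) (cayA_sub_sub hS _)
    (by simp) (by simp) hcd with hc | hc <;> simp only [Equiv.subLeft_apply] at hc
  · obtain ⟨h4, hx⟩ := ZMod.four_dvd_and_eq_of_add_self_eq_half heven (x := c - a)
      (by linear_combination -hc)
    have key : eVec c + eVec (c + half) = eVec (a + quarter) + eVec (a + half + quarter) := by
      rw [add_right_comm a half quarter]
      refine eVec_add_eVec_add_eq hhalf (hx.imp ?_ ?_) <;> intro hx' <;> linear_combination hx'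
    exact ⟨h4, key, by simpa only [plusState, key] using hpgst⟩
  · have hpair : eVec c + eVec (c + half) = eVec a + eVec (a + half) := by
      refine eVec_add_eVec_add_eq hhalf
        ((ZMod.eq_zero_or_eq_half_of_add_self_eq_zero_s11 heven (x := c - a) ?_).imp ?_ ?_)
      · linear_combination -hc
      all_goals intro hx'; linear_combination hx'
    exact absurd (by simp [plusState, hpair]) (hli.injective.ne zero_ne_one)

/-- in an even circulant graph, plus PGST from an antipodal plus state forces
`4 ∣ n` and the target to be `(e_{a+n/4}+e_{b+n/4})/√2`. -/
theorem plus_pgst_antipodal_target (n : ℕ) [NeZero n] (heven : Even n)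
    (S : Finset (ZMod n)) (h0 : (0 : ZMod n) ∉ S) (hS : ∀ s ∈ S, -s ∈ S)
    (a b c d : ZMod n) (hab : a ≠ b) (hanti : a - b = ((n / 2 : ℕ) : ZMod n))
    (hcd : c ≠ d)
    (hli : LinearIndependent ℂ ![plusState a b, plusState c d])
    (hpgst : PGST (cayA n S) (plusState a b) (plusState c d)) :
    4 ∣ n ∧
    eVec c + eVec d = eVec (a + ((n / 4 : ℕ) : ZMod n)) + eVec (b + ((n / 4 : ℕ) : ZMod n)) ∧
    PGST (cayA n S) (plusState a b)
      (plusState (a + ((n / 4 : ℕ) : ZMod n)) (b + ((n / 4 : ℕ) : ZMod n))) :=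
  plus_pgst_antipodal_target_general n heven S hS a b c d hab hanti hcd hli hpgst
end
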